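/- arXiv:1710.01149 — 3 statements merged into one kernel-verified Lean document; each statement's English description precedes it below -/
import Mathlib

section
/- Consider the discrete string ρ = Σ_{j=1}^n m_j δ_{x_j} with 0 < x_1 < ⋯ < x_n < 1, m_j > 0, and the k-th flow ẋ_j = (−1)^{k+1} G_k(x_j,x_j), ṁ_j = (−1)^k m_j ⟨G_{k,x}(x,x)⟩(x = x_j). These equations are Hamiltonian with respect to the canonical bracket {x_i, m_j} = δ_{ij} (and {x_i,x_j}={m_i,m_j}=0), with Hamiltonian H^{(k)} = ((−1)^{k+1}/(k+1)) Σ_{i=1}^n m_i G_k(x_i, x_i). -/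
open Finset

/-- The symmetric piecewise-affine kernel `G₀(s,t) = c(min(s,t))·ĉ(max(s,t))`
with `c(u) = c₁u + c₀`, `ĉ(u) = d₁u + d₀` (the Robin Green's function of `D_x²`). -/
noncomputable def grKer (c₁ c₀ d₁ d₀ : ℝ) (s t : ℝ) : ℝ :=
  (c₁ * min s t + c₀) * (d₁ * max s t + d₀)

/-- The arithmetic mean `⟨G₀ₓ(x,t)⟩(x = s)` of the one-sided `x`-derivatives of
`G₀(x,t)` at `x = s`. -/
noncomputable def avgDx (c₁ c₀ d₁ d₀ : ℝ) (s t : ℝ) : ℝ :=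
  if s < t then c₁ * (d₁ * t + d₀)
  else if t < s then (c₁ * t + c₀) * d₁
  else (c₁ * (d₁ * s + d₀) + (c₁ * s + c₀) * d₁) / 2

/-- Product of kernel values `G(q₀,q₁)G(q₁,q₂)⋯G(q_{k-1},q_k)` along a path `q`. -/
noncomputable def pathProd (G : ℝ → ℝ → ℝ) (k : ℕ) (q : Fin (k+1) → ℝ) : ℝ :=
  ∏ l : Fin k, G (q l.castSucc) (q l.succ)

/-- The discrete iterated kernel
`G_k(s,t) = ∑_{i₁,…,i_k} m_{i_k}⋯m_{i_1} G₀(s,x_{i_k})⋯G₀(x_{i_1},t)`. -/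
noncomputable def greenIter (G : ℝ → ℝ → ℝ) (n k : ℕ) (X M : Fin n → ℝ)
    (s t : ℝ) : ℝ :=
  ∑ i : Fin k → Fin n, (∏ l, M (i l)) *
    pathProd G (k+1) (Fin.cons s (Fin.snoc (X ∘ i) t))

/-- The Hamiltonian `H^(k) = ((-1)^{k+1}/(k+1)) ∑ᵢ mᵢ G_k(xᵢ,xᵢ)`. -/
noncomputable def HamF (G : ℝ → ℝ → ℝ) (n k : ℕ) (X M : Fin n → ℝ) : ℝ :=
  ((-1:ℝ)^(k+1) / ((k:ℝ)+1)) * ∑ j, M j * greenIter G n k X M (X j) (X j)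

/-- The averaged derivative `⟨G_{k,x}(x,x)⟩(x = s)` of the diagonal of `G_k`:
the derivative hits either the first kernel factor `G₀(x,ξ_k)` or the last one
`G₀(ξ_1,x)`, and one-sided derivatives of `G₀` are averaged. -/
noncomputable def avgDiagGk (c₁ c₀ d₁ d₀ : ℝ) (n k : ℕ) (X M : Fin n → ℝ)
    (s : ℝ) : ℝ :=
  ∑ i : Fin k → Fin n, (∏ l, M (i l)) *
    (avgDx c₁ c₀ d₁ d₀ s ((Fin.snoc (X ∘ i) s : Fin (k+1) → ℝ) 0)
        * pathProd (grKer c₁ c₀ d₁ d₀) k (Fin.snoc (X ∘ i) s)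
      + pathProd (grKer c₁ c₀ d₁ d₀) k (Fin.cons s (X ∘ i))
        * avgDx c₁ c₀ d₁ d₀ s ((Fin.cons s (X ∘ i) : Fin (k+1) → ℝ) (Fin.last k)))

/-!
Summing `mᵢ G_k(xᵢ,xᵢ)` over `i` writes `H^(k)` as `(-1)^{k+1}/(k+1)` times a sum over closed index
cycles `t₀ → t₁ → ⋯ → t_k → t₀` of `m_{t₀}⋯m_{t_k} G₀(x_{t₀},x_{t₁})⋯G₀(x_{t_k},x_{t₀})`.
A derivative in `mⱼ` or `xⱼ` falls on one of the `k+1` positions of a cycle, and rotating the cycle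
moves that position to `0`; so all positions contribute equally, the factor `k+1` cancels, and the
position-`0` terms are exactly `G_k(xⱼ,xⱼ)` and `mⱼ⟨G_{k,x}(x,x)⟩(x = xⱼ)`.
As the `xᵢ` are distinct, `G₀` is only differentiated off the diagonal, where it is smooth, or along
it, where `s ↦ G₀(s,s)` is smooth with twice the averaged derivative.
-/

open Function

namespace DiscreteString

section Rotation

variable {A α β : Type*} [AddGroup A] [Fintype A] [DecidableEq A]

lemma prod_erase_comp_add_right [CommMonoid β] (f : A → β) (p r : A) :
    ∏ q ∈ univ.erase p, f (q + r) = ∏ q ∈ univ.erase (p + r), f q :=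
  Finset.prod_equiv (Equiv.addRight r) (by simp) (fun _ _ => rfl)

lemma sum_comp_add_right [Fintype α] [AddCommMonoid β] (F : (A → α) → β) (r : A) :
    ∑ t : A → α, F (fun q => t (q + r)) = ∑ t, F t :=
  Fintype.sum_equiv ((Equiv.addRight r).symm.arrowCongr (Equiv.refl α)) _ _ (fun _ => rfl)

theorem sum_sum_eq_card_nsmul_sum_zero [Fintype α] [AddCommMonoid β] (W : (A → α) → A → β)
    (hW : ∀ t p r, W (fun q => t (q + r)) p = W t (p + r)) :
    ∑ t, ∑ p, W t p = Fintype.card A • ∑ t, W t 0 := by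
  have hslice (p : A) : ∑ t, W t p = ∑ t, W t 0 := by
    rw [← sum_comp_add_right (W · 0) p]
    simp only [hW, zero_add]
  rw [Finset.sum_comm]
  simp [hslice]

end Rotation

lemma sum_ite_apply_zero_eq {n k : ℕ} {β : Type*} [AddCommMonoid β]
    (F : (Fin (k+1) → Fin n) → β) (j : Fin n) :
    ∑ t : Fin (k+1) → Fin n, (if t 0 = j then F t else 0) = ∑ i, F (Fin.cons j i) := by
  rw [← (Fin.consEquiv fun _ => Fin n).sum_comp, Fintype.sum_prod_type]
  simp [Fin.consEquiv]

lemma sum_sum_ite_eq_mul_sum_cons {n k : ℕ} (w : (Fin (k+1) → Fin n) → Fin (k+1) → ℝ)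
    (hw : ∀ t p r, w (fun q => t (q + r)) p = w t (p + r)) (j : Fin n) :
    ∑ t : Fin (k+1) → Fin n, ∑ p, (if t p = j then w t p else 0)
      = (k + 1) * ∑ i, w (Fin.cons j i) 0 := by
  rw [sum_sum_eq_card_nsmul_sum_zero _ fun t p r => by simp only [hw], sum_ite_apply_zero_eq]
  simp [nsmul_eq_mul]

lemma prod_erase_zero {k : ℕ} {β : Type*} [CommMonoid β] (f : Fin (k+1) → β) :
    ∏ q ∈ univ.erase 0, f q = ∏ l : Fin k, f l.succ := by
  rw [Fin.univ_succ, Finset.erase_cons, Finset.prod_map]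
  rfl

lemma snoc_apply_eq_cons_add_one {k : ℕ} {α : Type*} (i : Fin k → α) (a : α)
    (m : Fin (k+1)) :
    (Fin.snoc i a : Fin (k+1) → α) m = (Fin.cons a i : Fin (k+1) → α) (m + 1) := by
  rw [Fin.snoc_eq_cons_rotate]
  exact congrArg _ (finRotate_apply m)

lemma hasDerivAt_prod_update {ι α : Type*} [Fintype ι] [DecidableEq ι] [DecidableEq α]
    (M : α → ℝ) (u : ι → α) (j : α) :
    HasDerivAt (fun s => ∏ p, update M j s (u p))
      (∑ p, if u p = j then ∏ q ∈ univ.erase p, M (u q) else 0) (M j) := by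
  have hfactor (p : ι) :
      HasDerivAt (fun s => update M j s (u p)) (if u p = j then 1 else 0) (M j) := by
    by_cases hp : u p = j
    · simpa only [hp, update_self, if_true] using hasDerivAt_id' (M j)
    · simpa only [update_of_ne hp, hp, if_false] using hasDerivAt_const (M j) (M (u p))
  refine (HasDerivAt.fun_finsetProd fun p _ => hfactor p).congr_deriv ?_
  simp [update_eq_self]

lemma hasDerivAt_kernel_update {G D : ℝ → ℝ → ℝ} (hsymm : ∀ s t, G s t = G t s)
    (hoff : ∀ x t, t ≠ x → HasDerivAt (G · t) (D x t) x)
    (hdiag : ∀ x, HasDerivAt (fun s => G s s) (2 * D x x) x)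
    {n : ℕ} {X : Fin n → ℝ} (hX : Injective X) (j a b : Fin n) :
    HasDerivAt (fun s => G (update X j s a) (update X j s b))
      ((if a = j then D (X j) (X b) else 0) + (if b = j then D (X j) (X a) else 0)) (X j) := by
  by_cases ha : a = j <;> by_cases hb : b = j
  · subst ha hb
    simpa only [update_self, if_true, two_mul] using hdiag _
  · subst ha
    simpa only [update_self, update_of_ne hb, if_true, hb, if_false, add_zero]
      using hoff _ _ (hX.ne hb)
  · subst hb
    simpa only [update_self, update_of_ne ha, ha, if_true, if_false, zero_add, hsymm (X a)]
      using hoff _ _ (hX.ne ha)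
  · simpa only [update_of_ne ha, update_of_ne hb, ha, hb, if_false, add_zero]
      using hasDerivAt_const (X j) (G (X a) (X b))

section CyclicProduct

variable (G D : ℝ → ℝ → ℝ) {n k : ℕ} (X : Fin n → ℝ)

def cycProd (t : Fin (k+1) → Fin n) : ℝ :=
  ∏ l, G (X (t l)) (X (t (l + 1)))

def cycProdErase (t : Fin (k+1) → Fin n) (p : Fin (k+1)) : ℝ :=
  ∏ l ∈ univ.erase p, G (X (t l)) (X (t (l + 1)))

/-- The derivative of `cycProd G X t` in the coordinate of the vertex at position `p`, through its
two incident edges, when `D` is the derivative of `G` in its first argument. -/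
def cycProdPartial (t : Fin (k+1) → Fin n) (p : Fin (k+1)) : ℝ :=
  D (X (t p)) (X (t (p + 1))) * cycProdErase G X t p
    + cycProdErase G X t (p - 1) * D (X (t p)) (X (t (p - 1)))

lemma cycProd_comp_add_right (t : Fin (k+1) → Fin n) (r : Fin (k+1)) :
    cycProd G X (fun q => t (q + r)) = cycProd G X t := by
  refine Fintype.prod_equiv (Equiv.addRight r) _ _ fun l => ?_
  simp only [Equiv.coe_addRight, add_right_comm]

lemma cycProdErase_comp_add_right (t : Fin (k+1) → Fin n) (p r : Fin (k+1)) :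
    cycProdErase G X (fun q => t (q + r)) p = cycProdErase G X t (p + r) := by
  rw [cycProdErase, cycProdErase, ← prod_erase_comp_add_right]
  simp only [add_right_comm]

lemma cycProdPartial_comp_add_right (t : Fin (k+1) → Fin n) (p r : Fin (k+1)) :
    cycProdPartial G D X (fun q => t (q + r)) p = cycProdPartial G D X t (p + r) := by
  simp only [cycProdPartial, cycProdErase_comp_add_right, add_right_comm p 1 r,
    sub_add_eq_add_sub]

lemma pathProd_cons_snoc (j : Fin n) (i : Fin k → Fin n) :
    pathProd G (k+1) (Fin.cons (X j) (Fin.snoc (X ∘ i) (X j)))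
      = cycProd G X (Fin.cons j i) := by
  rw [← Fin.comp_snoc, ← Fin.comp_cons]
  refine Finset.prod_congr rfl fun l _ => ?_
  rw [Function.comp_apply, Function.comp_apply, Fin.cons_succ, ← snoc_apply_eq_cons_add_one,
    Fin.cons_snoc_eq_snoc_cons, Fin.snoc_castSucc]

lemma pathProd_snoc (j : Fin n) (i : Fin k → Fin n) :
    pathProd G k (Fin.snoc (X ∘ i) (X j)) = cycProdErase G X (Fin.cons j i) 0 := by
  rw [cycProdErase, prod_erase_zero, ← Fin.comp_snoc]
  refine Finset.prod_congr rfl fun l _ => ?_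
  simp [snoc_apply_eq_cons_add_one]

lemma pathProd_cons (j : Fin n) (i : Fin k → Fin n) :
    pathProd G k (Fin.cons (X j) (X ∘ i)) = cycProdErase G X (Fin.cons j i) (Fin.last k) := by
  rw [cycProdErase, Fin.univ_castSuccEmb, Finset.erase_cons, Finset.prod_map, ← Fin.comp_cons]
  refine Finset.prod_congr rfl fun l _ => ?_
  simp [Fin.coeSucc_eq_succ]

lemma greenIter_diag_eq (M : Fin n → ℝ) (j : Fin n) :
    greenIter G n k X M (X j) (X j)
      = ∑ i : Fin k → Fin n, (∏ l, M (i l)) * cycProd G X (Fin.cons j i) := by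
  simp only [greenIter, pathProd_cons_snoc]

lemma hamF_eq_sum_cycProd (M : Fin n → ℝ) :
    HamF G n k X M
      = (-1) ^ (k+1) / (k+1) * ∑ t : Fin (k+1) → Fin n, (∏ p, M (t p)) * cycProd G X t := by
  rw [HamF, ← (Fin.consEquiv fun _ => Fin n).sum_comp, Fintype.sum_prod_type]
  simp [Fin.consEquiv, greenIter_diag_eq, Finset.mul_sum, Fin.prod_univ_succ, mul_assoc]

theorem hasDerivAt_hamF_mass (M : Fin n → ℝ) (j : Fin n) :
    HasDerivAt (fun s => HamF G n k X (update M j s))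
      ((-1) ^ (k+1) * greenIter G n k X M (X j) (X j)) (M j) := by
  simp only [hamF_eq_sum_cycProd]
  refine ((HasDerivAt.fun_sum fun t _ =>
    (hasDerivAt_prod_update M t j).mul_const (cycProd G X t)).const_mul _).congr_deriv ?_
  simp only [sum_mul, ite_mul, zero_mul]
  rw [sum_sum_ite_eq_mul_sum_cons (fun t p => (∏ q ∈ univ.erase p, M (t q)) * cycProd G X t)
    (fun t p r => by rw [prod_erase_comp_add_right (fun q => M (t q)), cycProd_comp_add_right]),
    greenIter_diag_eq]
  simp only [prod_erase_zero, Fin.cons_succ]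
  field_simp

lemma sum_cycProdErase_mul_eq_sum_ite (t : Fin (k+1) → Fin n) (j : Fin n) :
    ∑ l, cycProdErase G X t l * ((if t l = j then D (X j) (X (t (l + 1))) else 0)
      + (if t (l + 1) = j then D (X j) (X (t l)) else 0))
      = ∑ p, if t p = j then cycProdPartial G D X t p else 0 := by
  have hshift : ∑ l, (if t (l + 1) = j then cycProdErase G X t l * D (X j) (X (t l)) else 0)
      = ∑ p, if t p = j then cycProdErase G X t (p - 1) * D (X j) (X (t (p - 1))) else 0 := by
    rw [← (Equiv.subRight 1).sum_comp]
    simp only [Equiv.subRight_apply, sub_add_cancel]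
  simp only [mul_add, mul_ite, mul_zero, sum_add_distrib]
  rw [hshift, ← sum_add_distrib]
  refine sum_congr rfl fun p _ => ?_
  by_cases hp : t p = j
  · simp only [hp, if_true, cycProdPartial]
    ring
  · simp only [hp, if_false, add_zero]

lemma sum_prod_mul_sum_ite_cycProdPartial (M : Fin n → ℝ) (j : Fin n) :
    ∑ t : Fin (k+1) → Fin n,
        (∏ p, M (t p)) * ∑ p, (if t p = j then cycProdPartial G D X t p else 0)
      = (k + 1) * (M j * ∑ i : Fin k → Fin n,
          (∏ l, M (i l)) * cycProdPartial G D X (Fin.cons j i) 0) := by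
  have hw (t : Fin (k+1) → Fin n) (p r : Fin (k+1)) :
      (∏ q, M (t (q + r))) * cycProdPartial G D X (fun q => t (q + r)) p
        = (∏ q, M (t q)) * cycProdPartial G D X t (p + r) := by
    rw [Fintype.prod_equiv (Equiv.addRight r) (fun q => M (t (q + r))) (fun q => M (t q))
      fun _ => rfl, cycProdPartial_comp_add_right]
  conv_lhs => simp only [mul_sum, mul_ite, mul_zero]
  rw [sum_sum_ite_eq_mul_sum_cons (fun t p => (∏ q, M (t q)) * cycProdPartial G D X t p) hw j]
  simp only [Fin.prod_univ_succ, Fin.cons_zero, Fin.cons_succ, mul_assoc, ← mul_sum]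

variable {G D X}

lemma hasDerivAt_cycProd_update (hsymm : ∀ s t, G s t = G t s)
    (hoff : ∀ x t, t ≠ x → HasDerivAt (G · t) (D x t) x)
    (hdiag : ∀ x, HasDerivAt (fun s => G s s) (2 * D x x) x)
    (hX : Injective X) (t : Fin (k+1) → Fin n) (j : Fin n) :
    HasDerivAt (fun s => cycProd G (update X j s) t)
      (∑ p, if t p = j then cycProdPartial G D X t p else 0) (X j) := by
  refine (HasDerivAt.fun_finsetProd fun l _ =>
    hasDerivAt_kernel_update hsymm hoff hdiag hX j (t l) (t (l + 1))).congr_deriv ?_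
  rw [← sum_cycProdErase_mul_eq_sum_ite]
  simp [cycProdErase, update_eq_self]

theorem hasDerivAt_hamF_position (hsymm : ∀ s t, G s t = G t s)
    (hoff : ∀ x t, t ≠ x → HasDerivAt (G · t) (D x t) x)
    (hdiag : ∀ x, HasDerivAt (fun s => G s s) (2 * D x x) x)
    (hX : Injective X) (M : Fin n → ℝ) (j : Fin n) :
    HasDerivAt (fun s => HamF G n k (update X j s) M)
      (-((-1) ^ k * M j * ∑ i : Fin k → Fin n,
          (∏ l, M (i l)) * cycProdPartial G D X (Fin.cons j i) 0)) (X j) := by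
  simp only [hamF_eq_sum_cycProd]
  refine ((HasDerivAt.fun_sum fun t _ => (hasDerivAt_cycProd_update hsymm hoff hdiag hX t j)
    |>.const_mul (∏ p, M (t p))).const_mul _).congr_deriv ?_
  rw [sum_prod_mul_sum_ite_cycProdPartial]
  field_simp
  ring

end CyclicProduct

section RobinKernel

variable (c₁ c₀ d₁ d₀ : ℝ)

lemma grKer_comm (s t : ℝ) : grKer c₁ c₀ d₁ d₀ s t = grKer c₁ c₀ d₁ d₀ t s := by
  simp only [grKer, min_comm, max_comm]

lemma hasDerivAt_grKer_of_ne {x t : ℝ} (htx : t ≠ x) :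
    HasDerivAt (grKer c₁ c₀ d₁ d₀ · t) (avgDx c₁ c₀ d₁ d₀ x t) x := by
  rcases htx.lt_or_gt with htx | hxt
  · have hlin :
        HasDerivAt (fun s => (c₁ * t + c₀) * (d₁ * s + d₀)) ((c₁ * t + c₀) * d₁) x := by
      simpa using (((hasDerivAt_id x).const_mul d₁).add_const d₀).const_mul (c₁ * t + c₀)
    rw [avgDx, if_neg htx.not_gt, if_pos htx]
    exact hlin.congr_of_eventuallyEq <| (eventually_gt_nhds htx).mono fun s hs => by
      simp only [grKer, min_eq_right hs.le, max_eq_left hs.le]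
  · have hlin :
        HasDerivAt (fun s => (c₁ * s + c₀) * (d₁ * t + d₀)) (c₁ * (d₁ * t + d₀)) x := by
      simpa using (((hasDerivAt_id x).const_mul c₁).add_const c₀).mul_const (d₁ * t + d₀)
    rw [avgDx, if_pos hxt]
    exact hlin.congr_of_eventuallyEq <| (eventually_lt_nhds hxt).mono fun s hs => by
      simp only [grKer, min_eq_left hs.le, max_eq_right hs.le]

lemma hasDerivAt_grKer_diag (x : ℝ) :
    HasDerivAt (fun s => grKer c₁ c₀ d₁ d₀ s s) (2 * avgDx c₁ c₀ d₁ d₀ x x) x := by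
  have hleft := ((hasDerivAt_id' x).const_mul c₁).add_const c₀
  have hright := ((hasDerivAt_id' x).const_mul d₁).add_const d₀
  simp only [grKer, min_self, max_self, avgDx, lt_irrefl, if_false]
  refine (hleft.fun_mul hright).congr_deriv ?_
  ring

lemma avgDiagGk_eq {n k : ℕ} (X M : Fin n → ℝ) (j : Fin n) :
    avgDiagGk c₁ c₀ d₁ d₀ n k X M (X j) = ∑ i : Fin k → Fin n, (∏ l, M (i l)) *
      cycProdPartial (grKer c₁ c₀ d₁ d₀) (avgDx c₁ c₀ d₁ d₀) X (Fin.cons j i) 0 := by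
  have hzero_sub_one : (0 : Fin (k+1)) - 1 = Fin.last k :=
    sub_eq_iff_eq_add.mpr (Fin.last_add_one k).symm
  refine sum_congr rfl fun i _ => ?_
  rw [pathProd_snoc, pathProd_cons, cycProdPartial, hzero_sub_one, ← Fin.comp_snoc,
    ← Fin.comp_cons]
  simp [snoc_apply_eq_cons_add_one]

end RobinKernel

end DiscreteString

theorem discrete_string_flow_hamiltonian_general (n k : ℕ) (c₁ c₀ d₁ d₀ : ℝ)
    (X M : Fin n → ℝ) (hX : StrictMono X) :
    (∀ j : Fin n,
      HasDerivAt (fun s => HamF (grKer c₁ c₀ d₁ d₀) n k X (Function.update M j s))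
        ((-1:ℝ)^(k+1) * greenIter (grKer c₁ c₀ d₁ d₀) n k X M (X j) (X j)) (M j)) ∧
    (∀ j : Fin n,
      HasDerivAt (fun s => HamF (grKer c₁ c₀ d₁ d₀) n k (Function.update X j s) M)
        (-((-1:ℝ)^k * M j * avgDiagGk c₁ c₀ d₁ d₀ n k X M (X j))) (X j)) := by
  refine ⟨DiscreteString.hasDerivAt_hamF_mass _ X M, fun j => ?_⟩
  rw [DiscreteString.avgDiagGk_eq]
  exact DiscreteString.hasDerivAt_hamF_position (DiscreteString.grKer_comm c₁ c₀ d₁ d₀)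
    (fun _ _ => DiscreteString.hasDerivAt_grKer_of_ne c₁ c₀ d₁ d₀)
    (DiscreteString.hasDerivAt_grKer_diag c₁ c₀ d₁ d₀) hX.injective M j

/-- The equations `ẋⱼ = (-1)^{k+1} G_k(xⱼ,xⱼ)`,
`ṁⱼ = (-1)^k mⱼ ⟨G_{k,x}(x,x)⟩(x = xⱼ)` of the `k`-th flow of a discrete string
are Hamiltonian for the canonical bracket `{xᵢ,mⱼ} = δᵢⱼ` with Hamiltonian
`H^(k) = ((-1)^{k+1}/(k+1)) ∑ᵢ mᵢ G_k(xᵢ,xᵢ)`; that is,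
`∂H^(k)/∂mⱼ = (-1)^{k+1} G_k(xⱼ,xⱼ)` and
`-∂H^(k)/∂xⱼ = (-1)^k mⱼ ⟨G_{k,x}(x,x)⟩(x = xⱼ)`. -/
theorem discrete_string_flow_hamiltonian (n k : ℕ) (c₁ c₀ d₁ d₀ : ℝ)
    (X M : Fin n → ℝ) (hX : StrictMono X)
    (hX01 : ∀ j, X j ∈ Set.Ioo (0:ℝ) 1) (hM : ∀ j, 0 < M j) :
    (∀ j : Fin n,
      HasDerivAt (fun s => HamF (grKer c₁ c₀ d₁ d₀) n k X (Function.update M j s))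
        ((-1:ℝ)^(k+1) * greenIter (grKer c₁ c₀ d₁ d₀) n k X M (X j) (X j)) (M j)) ∧
    (∀ j : Fin n,
      HasDerivAt (fun s => HamF (grKer c₁ c₀ d₁ d₀) n k (Function.update X j s) M)
        (-((-1:ℝ)^k * M j * avgDiagGk c₁ c₀ d₁ d₀ n k X M (X j))) (X j)) :=
  discrete_string_flow_hamiltonian_general n k c₁ c₀ d₁ d₀ X M hX
end

section
/- With G_k(x_j,x_j) = Σ_{i_1,…,i_k} m_{i_k}⋯m_{i_1} G_0(x_j,x_{i_k}) G_0(x_{i_k},x_{i_{k−1}})⋯G_0(x_{i_1},x_j), the partial derivative with respect to m_l of H^{(k)} = ((−1)^{k+1}/(k+1)) Σ_i m_i G_k(x_i,x_i) equals (−1)^{k+1} G_k(x_l, x_l). -/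
/-!
Expanding `G_k(x_j,x_j)` turns `H^(k)` into `c ∑ₐ m_{a₀}⋯m_{a_k} · w(a)` over closed walks
`a : Fin (k+1) → Fin n`, where `w(a)` is the product of `G₀` around the cycle. Differentiating in
`m_l` marks one position `p` of the walk with `a p = l`; since both the monomial and `w` are
invariant under rotating the walk, every marked position contributes as much as position `0`,
which gives `(k+1) c ∑ (closed walks from l) = (k+1) c G_k(x_l,x_l)`.
-/

open Finset

section CycleProd

variable {ι R : Type*}

def cycleProd [CommMonoid R] {k : ℕ} (w : ι → ι → R) (a : Fin (k + 1) → ι) : R :=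
  ∏ p, w (a p) (a (p + 1))

theorem cycleProd_rotate [CommMonoid R] {k : ℕ} (w : ι → ι → R) (a : Fin (k + 1) → ι)
    (c : Fin (k + 1)) : cycleProd w (fun p => a (p + c)) = cycleProd w a :=
  Fintype.prod_equiv (Equiv.addRight c) _ _ fun p => by simp [add_right_comm]

theorem pathProd_cons_snoc_eq_cycleProd (G : ℝ → ℝ → ℝ) {k : ℕ} (X : ι → ℝ) (j : ι)
    (i : Fin k → ι) :
    pathProd G (k + 1) (Fin.cons (X j) (Fin.snoc (X ∘ i) (X j)))
      = cycleProd (fun a b => G (X a) (X b)) (Fin.cons j i : Fin (k + 1) → ι) := by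
  refine Finset.prod_congr rfl fun p _ => ?_
  congr 1
  · cases p using Fin.cases <;> simp
  · induction p using Fin.lastCases with
    | last => simp only [Fin.cons_succ, Fin.snoc_last, Fin.last_add_one, Fin.cons_zero]
    | cast m => simp [Fin.coeSucc_eq_succ]

end CycleProd

theorem Fin.prod_univ_erase_zero {M : Type*} [CommMonoid M] {k : ℕ} (f : Fin (k + 1) → M) :
    ∏ q ∈ univ.erase 0, f q = ∏ m : Fin k, f m.succ := by
  rw [← compl_singleton, ← Fin.image_succ_univ, prod_image fun _ _ _ _ h => Fin.succ_injective _ h]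

theorem Equiv.prod_univ_erase_comp {α M : Type*} [Fintype α] [DecidableEq α] [CommMonoid M]
    (e : α ≃ α) (f : α → M) (x : α) :
    ∏ q ∈ univ.erase x, f (e q) = ∏ q ∈ univ.erase (e x), f q := by
  calc ∏ q ∈ univ.erase x, f (e q) = ∏ q ∈ (univ.erase x).map e.toEmbedding, f q :=
        by rw [prod_map]; rfl
    _ = ∏ q ∈ univ.erase (e x), f q := by rw [map_erase, map_univ_equiv]; rfl

theorem Fin.sum_sum_eq_succ_nsmul_of_rotate {ι M : Type*} [Fintype ι] [AddCommMonoid M] {k : ℕ}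
    (g : (Fin (k + 1) → ι) → Fin (k + 1) → M)
    (hg : ∀ a c, g (fun q => a (q + c)) 0 = g a c) :
    ∑ a, ∑ p, g a p = (k + 1) • ∑ a, g a 0 := by
  have rotate (p : Fin (k + 1)) : ∑ a, g a p = ∑ a, g a 0 := by
    simp_rw [← hg _ p]
    exact Equiv.sum_comp ((Equiv.addRight p).symm.arrowCongr (Equiv.refl ι)) (g · 0)
  rw [sum_comm, sum_congr rfl fun p _ => rotate p, sum_const]

section Derivative

variable {𝕜 ι : Type*} [NontriviallyNormedField 𝕜] [DecidableEq ι]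

theorem hasDerivAt_prod_update {κ : Type*} [DecidableEq κ] (M : ι → 𝕜) (l : ι) (u : Finset κ)
    (a : κ → ι) :
    HasDerivAt (fun s => ∏ p ∈ u, Function.update M l s (a p))
      (∑ p ∈ u, (∏ q ∈ u.erase p, M (a q)) * if a p = l then 1 else 0) (M l) := by
  simpa [Function.update_eq_self, Pi.single_apply] using
    HasDerivAt.fun_finsetProd fun p _ => hasDerivAt_pi.1 (hasDerivAt_update M l (M l)) (a p)

theorem hasDerivAt_sum_prod_update_mul_cycleProd [Fintype ι] {k : ℕ} (w : ι → ι → 𝕜)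
    (M : ι → 𝕜) (l : ι) :
    HasDerivAt (fun s => ∑ a : Fin (k + 1) → ι, (∏ p, Function.update M l s (a p)) * cycleProd w a)
      ((k + 1) * ∑ i : Fin k → ι, (∏ q, M (i q)) * cycleProd w (Fin.cons l i : Fin (k + 1) → ι))
      (M l) := by
  refine (HasDerivAt.fun_sum fun a _ =>
    (hasDerivAt_prod_update M l univ a).mul_const (cycleProd w a)).congr_deriv ?_
  simp only [sum_mul]
  rw [Fin.sum_sum_eq_succ_nsmul_of_rotate
    (fun a p => (∏ q ∈ univ.erase p, M (a q)) * (if a p = l then 1 else 0) * cycleProd w a)]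
  · rw [nsmul_eq_mul, ← (Fin.consEquiv fun _ => ι).sum_comp, Fintype.sum_prod_type]
    simp [Fin.prod_univ_erase_zero, Fin.consEquiv]
  · intro a c
    have hrot := Equiv.prod_univ_erase_comp (Equiv.addRight c) (fun q => M (a q)) 0
    simp only [Equiv.coe_addRight, zero_add] at hrot
    simp only [zero_add, hrot, cycleProd_rotate]

end Derivative

theorem greenIter_self_eq_sum_cycleProd (G : ℝ → ℝ → ℝ) (n k : ℕ) (X M : Fin n → ℝ) (j : Fin n) :
    greenIter G n k X M (X j) (X j)
      = ∑ i : Fin k → Fin n, (∏ q, M (i q))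
          * cycleProd (fun a b => G (X a) (X b)) (Fin.cons j i : Fin (k + 1) → Fin n) :=
  sum_congr rfl fun i _ => by rw [pathProd_cons_snoc_eq_cycleProd]

theorem hamF_eq_sum_cycleProd (G : ℝ → ℝ → ℝ) (n k : ℕ) (X M : Fin n → ℝ) :
    HamF G n k X M = ((-1) ^ (k + 1) / (k + 1)) *
      ∑ a : Fin (k + 1) → Fin n, (∏ p, M (a p)) * cycleProd (fun a b => G (X a) (X b)) a := by
  rw [HamF, ← (Fin.consEquiv fun _ => Fin n).sum_comp, Fintype.sum_prod_type]
  simp [greenIter_self_eq_sum_cycleProd, mul_sum, Fin.prod_univ_succ, Fin.consEquiv, mul_assoc]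

theorem ham_m_derivative_general (n k : ℕ) (G₀ : ℝ → ℝ → ℝ)
    (X : Fin n → ℝ)
    (M : Fin n → ℝ) (l : Fin n) :
    HasDerivAt (fun s => HamF G₀ n k X (Function.update M l s))
      ((-1:ℝ)^(k+1) * greenIter G₀ n k X M (X l) (X l)) (M l) := by
  simp only [hamF_eq_sum_cycleProd, greenIter_self_eq_sum_cycleProd]
  refine ((hasDerivAt_sum_prod_update_mul_cycleProd _ M l).const_mul _).congr_deriv ?_
  field_simp

/-- For a fixed symmetric kernel `G₀` and fixed distinct points `x₁,…,xₙ`,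
`∂H^(k)/∂m_l = (-1)^{k+1} G_k(x_l,x_l)`. -/
theorem ham_m_derivative (n k : ℕ) (G₀ : ℝ → ℝ → ℝ)
    (hsymm : ∀ s t, G₀ s t = G₀ t s)
    (X : Fin n → ℝ) (hX : Function.Injective X)
    (M : Fin n → ℝ) (hM : ∀ j, 0 < M j) (l : Fin n) :
    HasDerivAt (fun s => HamF G₀ n k X (Function.update M l s))
      ((-1:ℝ)^(k+1) * greenIter G₀ n k X M (X l) (X l)) (M l) :=
  ham_m_derivative_general n k G₀ X M l
end

section
/- Consider the discrete string with masses m_1,…,m_n > 0 at points 0 < x_1 < ⋯ < x_n < 1, initial condition φ(x) = hx + 1 on [0, x_1) with h > 0, built piecewise linearly: on I_j = (x_j, x_{j+1}), φ = p_j(x − x_j) + q_j with p_0 = h, q_0 = 1, q_{j+1} = q_j + p_j l_j (continuity, l_j = x_{j+1} − x_j), and p_{j+1} = p_j − z m_{j+1} q_{j+1} (jump condition). Then the Weyl function W(z) = −φ(1;z)/φ_x(1;z) satisfies −W(−z) = l_n + 1/(z m_n + 1/(l_{n−1} + 1/(⋯ + 1/(l_0 + 1/h)))). -/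
/-!
On each interval the pair `(q, p)` (value and slope of `φ`) is transformed by continuity,
`q ↦ q + p l`, and by the jump condition, `p ↦ p + z m q`.  In terms of the ratio `q / p` these are
the Möbius maps `r ↦ l + r` and `r ↦ 1 / (z m + 1 / r)`, so starting from `q₀ / p₀ = 1 / h` the
ratio `qₙ / pₙ` unfolds into the continued fraction; `(pₙ lₙ + qₙ) / pₙ = lₙ + qₙ / pₙ` adds the
last gap.  Positivity of the data keeps every `pⱼ, qⱼ` positive, so no division by zero occurs.
-/

noncomputable def cfracL : List ℝ → ℝ
  | [] => 0
  | c :: r => 1 / (c + cfracL r)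

def weylEntries (h z : ℝ) (m l : ℕ → ℝ) : ℕ → List ℝ
  | 0 => [h]
  | n + 1 => z * m (n + 1) :: l n :: weylEntries h z m l n

theorem length_weylEntries (h z : ℝ) (m l : ℕ → ℝ) (n : ℕ) :
    (weylEntries h z m l n).length = 2 * n + 1 := by
  induction n with
  | zero => rfl
  | succ n ih => simp only [weylEntries, List.length_cons, ih]; ring

theorem getElem_weylEntries (h z : ℝ) (m l : ℕ → ℝ) (n i : ℕ)
    (hi : i < (weylEntries h z m l n).length) :
    (weylEntries h z m l n)[i] =
      if i = 2 * n then h else if i % 2 = 0 then z * m (n - i / 2) else l (n - 1 - i / 2) := by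
  rw [length_weylEntries] at hi
  induction n generalizing i with
  | zero =>
    obtain rfl : i = 0 := by omega
    rfl
  | succ n ih =>
    rcases i with _ | _ | i
    · simp [weylEntries]
    · simp [weylEntries, show 1 ≠ 2 * (n + 1) by omega]
    · simp only [weylEntries, List.getElem_cons_succ]
      rw [ih i (by rw [length_weylEntries]; omega) (by omega)]
      split_ifs <;> first | rfl | omega | (congr 1; omega) | (congr 2; omega)

theorem ofFn_eq_weylEntries (h z : ℝ) (m l : ℕ → ℝ) (n : ℕ) :
    List.ofFn (fun i : Fin (2 * n + 1) =>
        if (i : ℕ) = 2 * n then h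
        else if (i : ℕ) % 2 = 0 then z * m (n - (i : ℕ) / 2)
        else l (n - 1 - (i : ℕ) / 2)) = weylEntries h z m l n :=
  List.ext_getElem (by simp [length_weylEntries]) fun i _ _ => by
    rw [List.getElem_ofFn, getElem_weylEntries]

theorem div_eq_one_div_add_one_div_add_div {p q p' q' c l : ℝ} (hp : p ≠ 0) (hq' : q' ≠ 0)
    (hq'_eq : q' = q + p * l) (hp'_eq : p' = p + c * q') :
    q' / p' = 1 / (c + 1 / (l + q / p)) :=
  calc q' / p' = 1 / (p' / q') := (one_div_div _ _).symm
    _ = 1 / (c + p / q') := by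
      rw [hp'_eq, add_div, mul_div_cancel_right₀ _ hq', add_comm]
    _ = 1 / (c + 1 / (l + q / p)) := by
      rw [← one_div_div q' p, hq'_eq, add_div, mul_div_cancel_left₀ _ hp, add_comm (q / p)]

structure IsStringRecursion (h z : ℝ) (l m p q : ℕ → ℝ) : Prop where
  p_zero : p 0 = h
  q_zero : q 0 = 1
  q_succ : ∀ j, q (j + 1) = q j + p j * l j
  p_succ : ∀ j, p (j + 1) = p j + z * m (j + 1) * q (j + 1)

namespace IsStringRecursion

variable {h z : ℝ} {l m p q : ℕ → ℝ}

theorem pos (hs : IsStringRecursion h z l m p q) (hh : 0 < h) (hz : 0 < z) {n : ℕ}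
    (hm : ∀ j, 1 ≤ j → j ≤ n → 0 < m j) (hl : ∀ j < n, 0 < l j) :
    ∀ k ≤ n, 0 < p k ∧ 0 < q k := by
  intro k hk
  induction k with
  | zero => exact ⟨hs.p_zero ▸ hh, hs.q_zero ▸ one_pos⟩
  | succ k ih =>
    obtain ⟨hpk, hqk⟩ := ih (by omega)
    have hq' : 0 < q (k + 1) := by
      rw [hs.q_succ]
      have := hl k (by omega)
      positivity
    have hp' : 0 < p (k + 1) := by
      rw [hs.p_succ]
      have := hm (k + 1) (by omega) hk
      positivity
    exact ⟨hp', hq'⟩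

theorem div_eq_cfracL (hs : IsStringRecursion h z l m p q) {n : ℕ}
    (hp : ∀ k ≤ n, p k ≠ 0) (hq : ∀ k ≤ n, q k ≠ 0) :
    q n / p n = cfracL (weylEntries h z m l n) := by
  induction n with
  | zero => simp [hs.p_zero, hs.q_zero, weylEntries, cfracL]
  | succ n ih =>
    rw [weylEntries, cfracL, cfracL,
      ← ih (fun k hk => hp k (by omega)) (fun k hk => hq k (by omega))]
    exact div_eq_one_div_add_one_div_add_div (hp n (by omega)) (hq (n + 1) le_rfl)
      (hs.q_succ n) (hs.p_succ n)

end IsStringRecursion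

/-- `hp` is the jump condition at spectral parameter `-z`. -/
theorem weyl_continued_fraction_general (n : ℕ) (h z : ℝ) (hh : 0 < h) (hz : 0 < z)
    (x : ℕ → ℝ)
    (hmono : ∀ i ≤ n, x i < x (i+1))
    (l : ℕ → ℝ) (hl : ∀ j, l j = x (j+1) - x j)
    (m : ℕ → ℝ) (hm : ∀ j, 1 ≤ j → j ≤ n → 0 < m j)
    (p q : ℕ → ℝ) (hp0 : p 0 = h) (hq0 : q 0 = 1)
    (hq : ∀ j, q (j+1) = q j + p j * l j)
    (hp : ∀ j, p (j+1) = p j + z * m (j+1) * q (j+1)) :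
    (p n * l n + q n) / p n =
      l n + cfracL (List.ofFn (fun i : Fin (2*n+1) =>
        if (i:ℕ) = 2*n then h
        else if (i:ℕ) % 2 = 0 then z * m (n - (i:ℕ)/2)
        else l (n - 1 - (i:ℕ)/2))) := by
  have hs : IsStringRecursion h z l m p q := ⟨hp0, hq0, hq, hp⟩
  have hl_pos : ∀ j < n, 0 < l j := fun j hj => by
    rw [hl]
    exact sub_pos.mpr (hmono j hj.le)
  have hpos := hs.pos hh hz hm hl_pos
  have hpn : p n ≠ 0 := (hpos n le_rfl).1.ne'
  rw [ofFn_eq_weylEntries, ← hs.div_eq_cfracL (fun k hk => (hpos k hk).1.ne')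
    (fun k hk => (hpos k hk).2.ne'), add_div, mul_div_cancel_left₀ _ hpn]

/-- The discrete string with masses `m₁,…,mₙ > 0` at `0 < x₁ < ⋯ < xₙ < 1`
(`x₀ = 0`, `x_{n+1} = 1`, gaps `lⱼ = x_{j+1} - xⱼ`), and the piecewise-linear solution
`φ = pⱼ(x - xⱼ) + qⱼ` on `Iⱼ` with `p₀ = h`, `q₀ = 1`, continuity
`q_{j+1} = qⱼ + pⱼ lⱼ` and jump condition `p_{j+1} = pⱼ - (-z) m_{j+1} q_{j+1}`
(the recursion evaluated at spectral parameter `-z`, `z > 0`).  Then the Weyl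
function satisfies
`-W(-z) = (pₙ lₙ + qₙ)/pₙ = lₙ + 1/(z mₙ + 1/(l_{n-1} + 1/(⋯ + 1/(l₀ + 1/h))))`. -/
theorem weyl_continued_fraction (n : ℕ) (h z : ℝ) (hh : 0 < h) (hz : 0 < z)
    (x : ℕ → ℝ) (hx0 : x 0 = 0) (hxend : x (n+1) = 1)
    (hmono : ∀ i ≤ n, x i < x (i+1))
    (l : ℕ → ℝ) (hl : ∀ j, l j = x (j+1) - x j)
    (m : ℕ → ℝ) (hm : ∀ j, 1 ≤ j → j ≤ n → 0 < m j)
    (p q : ℕ → ℝ) (hp0 : p 0 = h) (hq0 : q 0 = 1)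
    (hq : ∀ j, q (j+1) = q j + p j * l j)
    (hp : ∀ j, p (j+1) = p j + z * m (j+1) * q (j+1)) :
    (p n * l n + q n) / p n =
      l n + cfracL (List.ofFn (fun i : Fin (2*n+1) =>
        if (i:ℕ) = 2*n then h
        else if (i:ℕ) % 2 = 0 then z * m (n - (i:ℕ)/2)
        else l (n - 1 - (i:ℕ)/2))) :=
  weyl_continued_fraction_general n h z hh hz x hmono l hl m hm p q hp0 hq0 hq hp
end
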